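/- Let K be a complex Hilbert space and P an orthogonal projection on K. If Q ∈ B(K) is skewadjoint (Q* = −Q), then its Holevo transform F[Q] := Q + Q·P·e₂(PQP)·P·Q satisfies the unitary structure relations with respect to the series product: F[Q]* ◁ F[Q] = 0 and F[Q] ◁ F[Q]* = 0, i.e. F[Q]* + F[Q] + F[Q]*·P·F[Q] = 0 and F[Q] + F[Q]* + F[Q]·P·F[Q]* = 0. -/

import Mathlib

/-!
Put `T = PQP`, `a = e₂(T)` and `b = e₂(-T)`. Since `P` is idempotent, both series products
reduce to `QP·M·PQ` for `M = a + b - 1 + bT - Ta + bT²a` (the second one after `Q ↦ -Q`, which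
swaps `a` and `b`). As `1 + T + T²e₂(T) = exp T`, the commuting elements `T, a, b` give
`T²M = exp T · exp(-T) - 1 = 0`. Skew-adjointness of `T` makes `M` self-adjoint, so the
C*-identity upgrades `T²M = 0` to `TM = MT = 0`; and `M ∈ T·B(K)` because `e₂(T) + e₂(-T) - 1`
is odd in `T`. Hence `M² = 0`, i.e. `M = 0`.
-/

open ContinuousLinearMap Filter Topology

noncomputable section

/-- `e₂(T) = ∑_{n≥0} Tⁿ/(n+2)!`. -/
def e2 {K : Type*} [NormedAddCommGroup K] [InnerProductSpace ℂ K]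
    (T : K →L[ℂ] K) : K →L[ℂ] K :=
  ∑' n : ℕ, (((n + 2).factorial : ℂ))⁻¹ • T ^ n

/-- The Holevo transform `F[Q] = Q + Q·P·e₂(PQP)·P·Q`. -/
def holevo {K : Type*} [NormedAddCommGroup K] [InnerProductSpace ℂ K]
    (P : K →L[ℂ] K) (Q : K →L[ℂ] K) : K →L[ℂ] K :=
  Q + Q * P * e2 (P * Q * P) * P * Q

open NormedSpace

section Ring

variable {R : Type*} [Ring R]

/-- The series product `F₁ ◁ F₂` with respect to `P`. -/
def seriesProduct (P F₁ F₂ : R) : R := F₁ + F₂ + F₁ * P * F₂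

def holevoDefect (T a b : R) : R := a + b - 1 + b * T - T * a + b * T ^ 2 * a

theorem seriesProduct_eq_holevoDefect {P : R} (hP : P * P = P) (Q a b : R) :
    seriesProduct P (-Q + Q * P * b * P * Q) (Q + Q * P * a * P * Q) =
      Q * P * holevoDefect (P * Q * P) a b * P * Q := by
  have hPP (x : R) : P * (P * x) = P * x := by rw [← mul_assoc, hP]
  simp only [seriesProduct, holevoDefect, pow_two, mul_add, add_mul, mul_sub, sub_mul, neg_mul,
    mul_one, mul_assoc, hPP, hP]
  abel

theorem sq_mul_holevoDefect {T a b : R} (ha : Commute T a) (hb : Commute T b)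
    (hab : Commute a b) :
    T ^ 2 * holevoDefect T a b = (1 + T + T ^ 2 * a) * (1 + -T + T ^ 2 * b) - 1 := by
  have haT (x : R) : a * (T * x) = T * (a * x) := by rw [← mul_assoc, ← ha.eq, mul_assoc]
  have hbT (x : R) : b * (T * x) = T * (b * x) := by rw [← mul_assoc, ← hb.eq, mul_assoc]
  simp only [holevoDefect, pow_two, mul_add, add_mul, mul_sub, mul_neg, mul_one, one_mul,
    mul_assoc, haT, hbT, ← ha.eq, ← hb.eq, ← hab.eq]
  abel

theorem holevoDefect_eq_mul {T a b V : R} (hb : Commute T b) (h : a + b - 1 = T * V) :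
    holevoDefect T a b = T * (V + b - a + b * T * a) :=
  calc holevoDefect T a b = T * V + T * b - T * a + T * b * T * a := by
        rw [holevoDefect, h, hb.eq]; noncomm_ring
    _ = T * (V + b - a + b * T * a) := by noncomm_ring

theorem star_holevoDefect [StarRing R] {T : R} (hT : star T = -T) (a b : R) :
    star (holevoDefect T a b) = holevoDefect T (star b) (star a) := by
  simp only [holevoDefect, star_add, star_sub, star_mul, star_one, star_pow, hT, neg_sq,
    mul_neg, neg_mul, mul_assoc]
  abel

end Ring

section CStarRing

variable {A : Type*} [NormedRing A] [StarRing A] [CStarRing A] {T M : A}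

theorem mul_eq_zero_of_sq_mul_eq_zero (hT : star T = -T) (hM : IsSelfAdjoint M)
    (h : T ^ 2 * M = 0) : T * M = 0 := by
  have hMT2 : M * T ^ 2 = 0 := by
    simpa [star_pow, hT, hM.star_eq] using congrArg star h
  rw [← CStarRing.star_mul_self_eq_zero_iff, star_mul, hM.star_eq, hT]
  calc M * -T * (T * M) = -(M * T ^ 2 * M) := by noncomm_ring
    _ = 0 := by rw [hMT2, zero_mul, neg_zero]

theorem eq_zero_of_sq_mul_eq_zero {W : A} (hT : star T = -T) (hM : IsSelfAdjoint M)
    (h : T ^ 2 * M = 0) (hW : M = T * W) : M = 0 := by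
  have hMT : M * T = 0 := by
    simpa [hT, hM.star_eq] using congrArg star (mul_eq_zero_of_sq_mul_eq_zero hT hM h)
  rw [← CStarRing.star_mul_self_eq_zero_iff, hM.star_eq]
  nth_rw 2 [hW]
  rw [← mul_assoc, hMT, zero_mul]

end CStarRing

section BanachAlgebra

variable {A : Type*} [NormedRing A] [NormedAlgebra ℂ A] [CompleteSpace A]

theorem summable_inv_factorial_add_smul_pow (k : ℕ) (T : A) :
    Summable fun n : ℕ => (((n + k).factorial : ℂ))⁻¹ • T ^ n := by
  refine (norm_expSeries_summable' (𝕂 := ℂ) T).of_norm_bounded fun n => ?_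
  simp only [norm_smul, norm_inv, Complex.norm_natCast]
  gcongr
  exact Nat.le_add_right n k

theorem exp_mul_exp_neg (T : A) : exp T * exp (-T) = 1 :=
  (invertibleExpOfMemBall (𝕂 := ℂ) (x := T)
    ((expSeries_radius_eq_top ℂ A).symm ▸ edist_lt_top _ _)).mul_invOf_self

end BanachAlgebra

section e2

variable {K : Type*} [NormedAddCommGroup K] [InnerProductSpace ℂ K] [CompleteSpace K]

theorem Commute.e2_right {X T : K →L[ℂ] K} (h : Commute X T) : Commute X (e2 T) := by
  have hs := summable_inv_factorial_add_smul_pow 2 T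
  rw [Commute, SemiconjBy, e2, ← hs.tsum_mul_left, ← hs.tsum_mul_right]
  refine tsum_congr fun n => ?_
  rw [mul_smul_comm, smul_mul_assoc, (h.pow_right n).eq]

theorem star_e2 (T : K →L[ℂ] K) : star (e2 T) = e2 (star T) := by
  simp only [e2, tsum_star, star_smul, star_pow, star_inv₀, star_natCast]

theorem exp_eq_one_add_add_sq_mul_e2 (T : K →L[ℂ] K) : exp T = 1 + T + T ^ 2 * e2 T := by
  have hs := expSeries_summable' (𝕂 := ℂ) T
  have hs1 := (summable_nat_add_iff 1).mpr hs
  simp only [exp_eq_tsum ℂ]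
  rw [hs.tsum_eq_zero_add, hs1.tsum_eq_zero_add, e2,
    ← (summable_inv_factorial_add_smul_pow 2 T).tsum_mul_left, add_assoc]
  congr 1
  · simp
  congr 1
  · simp
  refine tsum_congr fun n => ?_
  rw [mul_smul_comm, ← pow_add, add_comm 2 n]

theorem exists_e2_eq_inv_two_smul_one_add_mul (T : K →L[ℂ] K) :
    ∃ W, e2 T = (2 : ℂ)⁻¹ • 1 + T * W := by
  have hs := summable_inv_factorial_add_smul_pow 3 T
  refine ⟨∑' n : ℕ, (((n + 3).factorial : ℂ))⁻¹ • T ^ n, ?_⟩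
  rw [e2, (summable_inv_factorial_add_smul_pow 2 T).tsum_eq_zero_add, ← hs.tsum_mul_left]
  congr 1
  refine tsum_congr fun n => ?_
  rw [mul_smul_comm, ← pow_succ']

theorem exists_e2_add_e2_neg_sub_one_eq_mul (T : K →L[ℂ] K) :
    ∃ V, e2 T + e2 (-T) - 1 = T * V := by
  obtain ⟨V, hV⟩ := exists_e2_eq_inv_two_smul_one_add_mul T
  obtain ⟨W, hW⟩ := exists_e2_eq_inv_two_smul_one_add_mul (-T)
  refine ⟨V - W, ?_⟩
  rw [hV, hW, neg_mul, mul_sub]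
  module

theorem holevoDefect_e2_eq_zero {T : K →L[ℂ] K} (hT : star T = -T) :
    holevoDefect T (e2 T) (e2 (-T)) = 0 := by
  have hTa : Commute T (e2 T) := (Commute.refl T).e2_right
  have hTb : Commute T (e2 (-T)) := (Commute.refl T).neg_right.e2_right
  have hab : Commute (e2 T) (e2 (-T)) := hTa.symm.neg_right.e2_right
  have hself : IsSelfAdjoint (holevoDefect T (e2 T) (e2 (-T))) := by
    rw [IsSelfAdjoint, star_holevoDefect hT, star_e2, star_e2, star_neg, hT, neg_neg]
  have hsq : T ^ 2 * holevoDefect T (e2 T) (e2 (-T)) = 0 := by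
    rw [sq_mul_holevoDefect hTa hTb hab, ← exp_eq_one_add_add_sq_mul_e2, ← neg_sq,
      ← exp_eq_one_add_add_sq_mul_e2, exp_mul_exp_neg, sub_self]
  obtain ⟨V, hV⟩ := exists_e2_add_e2_neg_sub_one_eq_mul T
  exact eq_zero_of_sq_mul_eq_zero hT hself hsq (holevoDefect_eq_mul hTb hV)

end e2

theorem holevo_transform_of_skewadjoint_satisfies_unitary_structure_relations
    {K : Type*} [NormedAddCommGroup K] [InnerProductSpace ℂ K] [CompleteSpace K]
    (P : K →L[ℂ] K) (hP : IsSelfAdjoint P) (hP2 : P * P = P)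
    (Q : K →L[ℂ] K) (hQ : adjoint Q = -Q) :
    adjoint (holevo P Q) + holevo P Q + adjoint (holevo P Q) * P * holevo P Q = 0 ∧
    holevo P Q + adjoint (holevo P Q) + holevo P Q * P * adjoint (holevo P Q) = 0 := by
  have hQ' : star Q = -Q := by rw [star_eq_adjoint, hQ]
  have hT : star (P * Q * P) = -(P * Q * P) := by
    simp only [star_mul, hP.star_eq, hQ', mul_neg, neg_mul, mul_assoc]
  have hadj : adjoint (holevo P Q) = -Q + Q * P * e2 (-(P * Q * P)) * P * Q := by
    simp only [← star_eq_adjoint, holevo, star_add, star_mul, hP.star_eq, hQ', star_e2,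
      mul_neg, neg_mul, neg_neg, mul_assoc]
  have hnegT : P * -Q * P = -(P * Q * P) := by rw [mul_neg, neg_mul]
  constructor
  · change seriesProduct P (adjoint (holevo P Q)) (holevo P Q) = 0
    rw [hadj, holevo, seriesProduct_eq_holevoDefect hP2, holevoDefect_e2_eq_zero hT]
    simp only [mul_zero, zero_mul]
  · change seriesProduct P (holevo P Q) (adjoint (holevo P Q)) = 0
    have h := seriesProduct_eq_holevoDefect hP2 (-Q) (e2 (-(P * Q * P))) (e2 (-(-(P * Q * P))))
    rw [hnegT, holevoDefect_e2_eq_zero (by rw [star_neg, hT])] at h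
    rw [hadj, holevo]
    simpa using h
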